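/- arXiv:2504.05274 — 4 statements merged into one kernel-verified Lean document; each statement's English description precedes it below -/
import Mathlib

section
/- Let e ≥ 1 and N be natural numbers, let M : ℕ → Matrix (Fin e) (Fin e) ℝ, and let Y : ℝ → Matrix (Fin e) (Fin e) ℝ be continuous on [0, N] with Y(0) = 1 (the identity matrix), such that for every natural number k < N and every t in the open interval (k, k+1), Y is differentiable at t with derivative M(k) · Y(t). Then Y(N) = exp(M(N−1)) · exp(M(N−2)) ⋯ exp(M(0)), where exp denotes the matrix exponential. -/
/-!
On each interval `[k, k + 1]` the coefficient is the constant `A = M k`, and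
`t ↦ exp ((k - t) • A) * Y t` has derivative `0` there, hence is constant; this gives
`Y (k + 1) = exp A * Y k`, and the product formula follows by induction on `N`.
-/

attribute [local instance] Matrix.frobeniusNormedRing Matrix.frobeniusNormedAlgebra

open Set NormedSpace

theorem eq_of_continuousOn_of_hasDerivAt_zero {E : Type*} [NormedAddCommGroup E]
    [NormedSpace ℝ E] [CompleteSpace E] {f : ℝ → E} {a b : ℝ} (hab : a ≤ b)
    (hcont : ContinuousOn f (Icc a b)) (hderiv : ∀ t ∈ Ioo a b, HasDerivAt f 0 t) :
    f b = f a := by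
  have h := intervalIntegral.integral_eq_sub_of_hasDerivAt_of_le hab hcont hderiv
    intervalIntegrable_const
  rwa [intervalIntegral.integral_zero, eq_comm, sub_eq_zero] at h

section LinearODE

variable {𝔸 : Type*} [NormedRing 𝔸] [NormedAlgebra ℝ 𝔸] [CompleteSpace 𝔸]

theorem exp_smul_mul_exp_neg_smul (A : 𝔸) (s : ℝ) : exp (s • A) * exp (-s • A) = 1 := by
  -- `exp_add_of_commute` is stated for Banach `ℚ`-algebras
  let := NormedAlgebra.restrictScalars ℚ ℝ 𝔸
  rw [← exp_add_of_commute (((Commute.refl A).smul_left s).smul_right (-s)), ← add_smul,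
    add_neg_cancel, zero_smul, exp_zero]

theorem hasDerivAt_exp_sub_smul_mul {A : 𝔸} {Y : ℝ → 𝔸} {a t : ℝ}
    (hY : HasDerivAt Y (A * Y t) t) :
    HasDerivAt (fun s => exp ((a - s) • A) * Y s) 0 t := by
  have hexp : HasDerivAt (fun s : ℝ => exp ((a - s) • A))
      ((-1 : ℝ) • (exp ((a - t) • A) * A)) t :=
    (hasDerivAt_exp_smul_const A (a - t)).scomp t ((hasDerivAt_id t).const_sub a)
  have h := hexp.mul hY
  rwa [neg_one_smul, neg_mul, mul_assoc, neg_add_cancel] at h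

theorem eq_exp_smul_mul_of_hasDerivAt_mul (A : 𝔸) {Y : ℝ → 𝔸} {a b : ℝ} (hab : a ≤ b)
    (hcont : ContinuousOn Y (Icc a b)) (hODE : ∀ t ∈ Ioo a b, HasDerivAt Y (A * Y t) t) :
    Y b = exp ((b - a) • A) * Y a := by
  have hconst : exp ((a - b) • A) * Y b = exp ((a - a) • A) * Y a := by
    refine eq_of_continuousOn_of_hasDerivAt_zero hab ?_
      (fun t ht => hasDerivAt_exp_sub_smul_mul (hODE t ht))
    exact (((differentiable_exp_smul_const (𝕂 := ℝ) A).continuous.comp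
      (continuous_const.sub continuous_id)).continuousOn).mul hcont
  rw [sub_self, zero_smul, exp_zero, one_mul] at hconst
  rw [← hconst, ← mul_assoc, ← neg_sub b a, exp_smul_mul_exp_neg_smul, one_mul]

end LinearODE

theorem eq_prod_reverse_range_mul_of_succ {R : Type*} [Monoid R] {y f : ℕ → R} {N : ℕ}
    (hstep : ∀ k < N, y (k + 1) = f k * y k) :
    y N = ((List.range N).reverse.map f).prod * y 0 := by
  induction N with
  | zero => simp
  | succ n ih =>
    rw [hstep n n.lt_succ_self, ih fun k hk => hstep k (hk.trans n.lt_succ_self)]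
    simp [List.range_succ, mul_assoc]

theorem piecewise_linear_ode_solution_general (e : ℕ) (N : ℕ)
    (M : ℕ → Matrix (Fin e) (Fin e) ℝ)
    (Y : ℝ → Matrix (Fin e) (Fin e) ℝ)
    (hcont : ContinuousOn Y (Set.Icc (0 : ℝ) N))
    (hY0 : Y 0 = 1)
    (hODE : ∀ k : ℕ, k < N → ∀ t ∈ Set.Ioo (k : ℝ) ((k : ℝ) + 1),
      HasDerivAt Y (M k * Y t) t) :
    Y N = (((List.range N).reverse.map (fun k => NormedSpace.exp (M k)))).prod := by
  have hstep : ∀ k < N, Y ((k + 1 : ℕ) : ℝ) = exp (M k) * Y k := by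
    intro k hk
    have hsub : Icc (k : ℝ) (k + 1) ⊆ Icc 0 N :=
      Icc_subset_Icc k.cast_nonneg (by exact_mod_cast hk)
    have h := eq_exp_smul_mul_of_hasDerivAt_mul (M k) (by linarith) (hcont.mono hsub) (hODE k hk)
    rwa [add_sub_cancel_left, one_smul, ← Nat.cast_succ] at h
  simpa [hY0] using eq_prod_reverse_range_mul_of_succ (y := fun n : ℕ => Y n) hstep

/-- The solution of the matrix-valued linear ODE `Ẏ(t) = M(⌊t⌋) · Y(t)` with
piecewise-constant coefficients and `Y(0) = 1` is, at integer times, the ordered product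
of the matrix exponentials of the coefficient matrices:
`Y(N) = exp(M(N-1)) · exp(M(N-2)) ⋯ exp(M(0))`. -/
theorem piecewise_linear_ode_solution (e : ℕ) (he : 1 ≤ e) (N : ℕ)
    (M : ℕ → Matrix (Fin e) (Fin e) ℝ)
    (Y : ℝ → Matrix (Fin e) (Fin e) ℝ)
    (hcont : ContinuousOn Y (Set.Icc (0 : ℝ) N))
    (hY0 : Y 0 = 1)
    (hODE : ∀ k : ℕ, k < N → ∀ t ∈ Set.Ioo (k : ℝ) ((k : ℝ) + 1),
      HasDerivAt Y (M k * Y t) t) :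
    Y N = (((List.range N).reverse.map (fun k => NormedSpace.exp (M k)))).prod :=
  piecewise_linear_ode_solution_general e N M Y hcont hY0 hODE
end

section
/- Let (τ : H → G, α) be a crossed module of groups. Suppose X, Y, X', Y' ∈ H and x_s, x_e, x_n, x_w ∈ G satisfy the boundary condition τ(X)·x_w·x_n = x_s·x_e. Then the interchange law holds: α_{x_s}(Y) · X · α_{x_w}(α_{x_n}(Y') · X') = α_{x_s}(Y · α_{x_e}(Y')) · X · α_{x_w}(X'). (Here x_n is the south edge of the cell containing X' and x_e is the west edge of the cell containing Y', reflecting the matching conditions x'_s = x_n and y_w = x_e.) -/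
section CrossedModule

variable {G H : Type*} [Group G] [Group H] (τ : H →* G) (α : G →* MulAut H)

theorem mul_apply_eq_apply_mul_of_feedback_mul_eq
    (peif : ∀ h h' : H, α (τ h) h' = h * h' * h⁻¹)
    {X : H} {a b : G} (hab : τ X * a = b) (h : H) :
    X * α a h = α b h * X := by
  rw [← hab, map_mul, MulAut.mul_apply, peif]
  group

end CrossedModule

theorem crossed_module_interchange_general {G H : Type*} [Group G] [Group H]
    (τ : H →* G) (α : G →* MulAut H)
    (peif : ∀ h h' : H, α (τ h) h' = h * h' * h⁻¹)
    (X Y X' Y' : H) (xs xe xn xw : G)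
    (hX : τ X * xw * xn = xs * xe) :
    α xs Y * X * α xw (α xn Y' * X') = α xs (Y * α xe Y') * X * α xw X' := by
  have slide : X * α xw (α xn Y') = α xs (α xe Y') * X := by
    have hboundary : τ X * (xw * xn) = xs * xe := by rw [← mul_assoc, hX]
    simpa only [map_mul, MulAut.mul_apply] using
      mul_apply_eq_apply_mul_of_feedback_mul_eq τ α peif hboundary Y'
  calc α xs Y * X * α xw (α xn Y' * X')
      = α xs Y * (X * α xw (α xn Y')) * α xw X' := by rw [map_mul]; group
    _ = α xs Y * (α xs (α xe Y') * X) * α xw X' := by rw [slide]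
    _ = α xs (Y * α xe Y') * X * α xw X' := by rw [map_mul]; group

/-- Interchange law for the double category associated to a crossed module
`(τ : H → G, α)`: if `τ X * x_w * x_n = x_s * x_e`, then
`α x_s Y * X * α x_w (α x_n Y' * X') = α x_s (Y * α x_e Y') * X * α x_w X'`. -/
theorem crossed_module_interchange {G H : Type*} [Group G] [Group H]
    (τ : H →* G) (α : G →* MulAut H)
    (equi : ∀ (g : G) (h : H), τ (α g h) = g * τ h * g⁻¹)
    (peif : ∀ h h' : H, α (τ h) h' = h * h' * h⁻¹)
    (X Y X' Y' : H) (xs xe xn xw : G)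
    (hX : τ X * xw * xn = xs * xe) :
    α xs Y * X * α xw (α xn Y' * X') = α xs (Y * α xe Y') * X * α xw X' :=
  crossed_module_interchange_general τ α peif X Y X' Y' xs xe xn xw hX
end

section
/- Let K be a field and n, p, q natural numbers. For a quadruple h = (P, B, R, N) with P ∈ GL_n(K), B ∈ K^{n×q}, R ∈ K^{p×n}, N ∈ K^{p×q}, define τ(h) to be the pair of block matrices ([[P, 0],[R, 1_p]], [[P, B],[0, 1_q]]). Then for all such quadruples h = (P, B, R, N) and h' = (P', B', R', N'), with the product h •_h h' = (P'·P, P'·B + B', R'·P + R, R'·B + N + N'), one has τ(h •_h h') = τ(h') · τ(h), where the product on the right is entrywise matrix multiplication of the pairs. -/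
/-- The carrier of the group `H = GL^{n,p,q}₋₁`: quadruples `(P, B, R, N)` with
`P ∈ GL_n(K)`, `B ∈ K^{n×q}`, `R ∈ K^{p×n}`, `N ∈ K^{p×q}`. -/
def GLmoH (K : Type*) [Field K] (n p q : ℕ) : Type _ :=
  Matrix.GeneralLinearGroup (Fin n) K × Matrix (Fin n) (Fin q) K ×
    Matrix (Fin p) (Fin n) K × Matrix (Fin p) (Fin q) K

/-- The operation `(P,B,R,N) •_h (P',B',R',N') = (P'P, P'B + B', R'P + R, R'B + N + N')`. -/
def GLmoHMul {K : Type*} [Field K] {n p q : ℕ} (x y : GLmoH K n p q) : GLmoH K n p q :=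
  (y.1 * x.1,
   (y.1 : Matrix (Fin n) (Fin n) K) * x.2.1 + y.2.1,
   y.2.2.1 * (x.1 : Matrix (Fin n) (Fin n) K) + x.2.2.1,
   y.2.2.1 * x.2.1 + x.2.2.2 + y.2.2.2)

/-- The feedback map `τ (P,B,R,N) = ([[P, 0],[R, 1]], [[P, B],[0, 1]])` of the general
linear crossed module. -/
def GLmoFeedback {K : Type*} [Field K] {n p q : ℕ} (x : GLmoH K n p q) :
    Matrix (Fin n ⊕ Fin p) (Fin n ⊕ Fin p) K × Matrix (Fin n ⊕ Fin q) (Fin n ⊕ Fin q) K :=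
  (Matrix.fromBlocks (x.1 : Matrix (Fin n) (Fin n) K) 0 x.2.2.1 1,
   Matrix.fromBlocks (x.1 : Matrix (Fin n) (Fin n) K) x.2.1 0 1)

namespace Matrix

variable {l m α : Type*} [Fintype l] [Fintype m] [DecidableEq m] [Semiring α]

theorem fromBlocks_zero_one_mul_fromBlocks_zero_one (P' P : Matrix l l α)
    (R' R : Matrix m l α) :
    fromBlocks P' (0 : Matrix l m α) R' 1 * fromBlocks P 0 R 1 =
      fromBlocks (P' * P) (0 : Matrix l m α) (R' * P + R) 1 := by
  simp only [fromBlocks_multiply, Matrix.mul_zero, Matrix.zero_mul, Matrix.one_mul,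
    Matrix.mul_one, add_zero, zero_add]

theorem fromBlocks_one_mul_fromBlocks_one (P' P : Matrix l l α) (B' B : Matrix l m α) :
    fromBlocks P' B' (0 : Matrix m l α) 1 * fromBlocks P B 0 1 =
      fromBlocks (P' * P) (P' * B + B') (0 : Matrix m l α) 1 := by
  simp only [fromBlocks_multiply, Matrix.mul_zero, Matrix.zero_mul, Matrix.mul_one, add_zero,
    zero_add]

end Matrix

/-- The feedback map of the general linear crossed module is compatible with the group
structures: `τ (h •_h h') = τ h' * τ h` (entrywise matrix multiplication of pairs). -/
theorem GLmo_feedback_antihom (K : Type*) [Field K] (n p q : ℕ)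
    (h h' : GLmoH K n p q) :
    GLmoFeedback (GLmoHMul h h') =
      ((GLmoFeedback h').1 * (GLmoFeedback h).1, (GLmoFeedback h').2 * (GLmoFeedback h).2) := by
  simp only [GLmoFeedback, GLmoHMul, Matrix.GeneralLinearGroup.coe_mul,
    Matrix.fromBlocks_zero_one_mul_fromBlocks_zero_one, Matrix.fromBlocks_one_mul_fromBlocks_one]
end

section
/- Let (τ : H → G, α) be a crossed module of groups, let h, v : ℤ × ℤ → G and X : ℤ × ℤ → H satisfy τ(X(i,j)) · v(i,j) · h(i, j+1) = h(i,j) · v(i+1, j) for all i, j ∈ ℤ. For a ≤ b and j define Fh(a,b,j) := h(a,j) · h(a+1,j) ⋯ h(b−1,j), and for i and c ≤ d define Fv(i,c,d) := v(i,c) · v(i,c+1) ⋯ v(i,d−1). Then there exists a unique function F₂ assigning to each rectangle (a, b, c, d) with a ≤ b, c ≤ d an element F₂(a,b,c,d) ∈ H such that: (i) F₂(i,i+1,j,j+1) = X(i,j) for all i, j; (ii) F₂(a,b,c,d) = 1 whenever a = b or c = d; (iii) τ(F₂(a,b,c,d)) · Fv(a,c,d) · Fh(a,b,d) = Fh(a,b,c)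 · Fv(b,c,d) (boundary condition); (iv) F₂(a,b,c,d) = α_{Fh(a,b',c)}(F₂(b',b,c,d)) · F₂(a,b',c,d) whenever a ≤ b' ≤ b (horizontal composition); and (v) F₂(a,b,c,d) = F₂(a,b,c,d') · α_{Fv(a,c,d')}(F₂(a,b,d',d)) whenever c ≤ d' ≤ d (vertical composition). -/
/-!
By (iv) and (v) an aggregation is determined by its values on elementary squares: a rectangle
is the vertical stack of its rows, and a row is the horizontal composite of its squares. So
uniqueness is a double induction, and for existence one defines the aggregate exactly this way
(`rectAgg`). The boundary condition holds because, by EQUI, horizontal and vertical composites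
of 2-cells of `B𝔠` are 2-cells; (v) holds by construction. (iv) is the interchange law, and
it comes from PEIF: conjugation by a 2-cell `x` turns the action of the west-then-north
boundary path of `x` into that of its south-then-east path.
-/

/-- Ordered product `h(a,j) * h(a+1,j) * ⋯ * h(b-1,j)` of horizontal edge values. -/
def Fh {G : Type*} [Monoid G] (h : ℤ × ℤ → G) (a b j : ℤ) : G :=
  (((List.range (b - a).toNat).map (fun k => h (a + k, j)))).prod

/-- Ordered product `v(i,c) * v(i,c+1) * ⋯ * v(i,d-1)` of vertical edge values. -/
def Fv {G : Type*} [Monoid G] (v : ℤ × ℤ → G) (i c d : ℤ) : G :=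
  (((List.range (d - c).toNat).map (fun k => v (i, c + k)))).prod

/-- The defining conditions for an aggregation `F₂` of crossed-module--valued planar data
over rectangles: (i) values on elementary squares, (ii) triviality on degenerate
rectangles, (iii) the boundary condition, (iv) horizontal and (v) vertical composition. -/
def IsCMRectAggregation {G H : Type*} [Group G] [Group H]
    (τ : H →* G) (α : G →* MulAut H)
    (h v : ℤ × ℤ → G) (X : ℤ × ℤ → H)
    (F : ∀ a b c d : ℤ, a ≤ b → c ≤ d → H) : Prop :=
  (∀ i j : ℤ, F i (i + 1) j (j + 1) (by omega) (by omega) = X (i, j)) ∧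
  (∀ (a b c d : ℤ) (hab : a ≤ b) (hcd : c ≤ d), a = b ∨ c = d → F a b c d hab hcd = 1) ∧
  (∀ (a b c d : ℤ) (hab : a ≤ b) (hcd : c ≤ d),
    τ (F a b c d hab hcd) * Fv v a c d * Fh h a b d = Fh h a b c * Fv v b c d) ∧
  (∀ (a b' b c d : ℤ) (h1 : a ≤ b') (h2 : b' ≤ b) (hcd : c ≤ d),
    F a b c d (h1.trans h2) hcd =
      α (Fh h a b' c) (F b' b c d h2 hcd) * F a b' c d h1 hcd) ∧
  (∀ (a b c d' d : ℤ) (hab : a ≤ b) (h1 : c ≤ d') (h2 : d' ≤ d),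
    F a b c d hab (h1.trans h2) =
      F a b c d' hab h1 * α (Fv v a c d') (F a b d' d hab h2))

section PathProd
variable {G : Type*} [Monoid G]

def pathProd (f : ℤ → G) (a b : ℤ) : G :=
  ((List.range (b - a).toNat).map (fun k => f (a + k))).prod

lemma pathProd_self (f : ℤ → G) (a : ℤ) : pathProd f a a = 1 := by
  simp [pathProd]

lemma pathProd_add_natCast (f : ℤ → G) (a : ℤ) (n : ℕ) :
    pathProd f a (a + n) = ((List.range n).map (fun k : ℕ => f (a + k))).prod := by
  simp [pathProd, ← List.map_eq_flatMap, Function.comp_def]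

lemma pathProd_trans (f : ℤ → G) {a b c : ℤ} (hab : a ≤ b) (hbc : b ≤ c) :
    pathProd f a c = pathProd f a b * pathProd f b c := by
  obtain ⟨n, rfl⟩ := Int.le.dest hab
  obtain ⟨k, rfl⟩ := Int.le.dest hbc
  rw [pathProd_add_natCast f (a + n), pathProd_add_natCast, add_assoc, ← Nat.cast_add,
    pathProd_add_natCast, List.range_add, List.map_append, List.prod_append, List.map_map]
  simp [Function.comp_def, add_assoc]

lemma pathProd_succ (f : ℤ → G) {a b : ℤ} (hab : a ≤ b) :
    pathProd f a (b + 1) = pathProd f a b * f b := by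
  rw [pathProd_trans f hab (Int.le_add_one le_rfl)]
  congr 1
  simpa using pathProd_add_natCast f b 1

lemma Fh_self (h : ℤ × ℤ → G) (a j : ℤ) : Fh h a a j = 1 :=
  pathProd_self (fun i => h (i, j)) a

lemma Fh_trans (h : ℤ × ℤ → G) {a b c : ℤ} (j : ℤ) (hab : a ≤ b) (hbc : b ≤ c) :
    Fh h a c j = Fh h a b j * Fh h b c j :=
  pathProd_trans (fun i => h (i, j)) hab hbc

lemma Fh_succ (h : ℤ × ℤ → G) {a b : ℤ} (j : ℤ) (hab : a ≤ b) :
    Fh h a (b + 1) j = Fh h a b j * h (b, j) :=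
  pathProd_succ (fun i => h (i, j)) hab

lemma Fv_self (v : ℤ × ℤ → G) (i c : ℤ) : Fv v i c c = 1 :=
  pathProd_self (fun j => v (i, j)) c

lemma Fv_trans (v : ℤ × ℤ → G) (i : ℤ) {c d e : ℤ} (hcd : c ≤ d) (hde : d ≤ e) :
    Fv v i c e = Fv v i c d * Fv v i d e :=
  pathProd_trans (fun j => v (i, j)) hcd hde

lemma Fv_succ (v : ℤ × ℤ → G) (i : ℤ) {c d : ℤ} (hcd : c ≤ d) :
    Fv v i c (d + 1) = Fv v i c d * v (i, d) :=
  pathProd_succ (fun j => v (i, j)) hcd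

end PathProd

section TwoCell
variable {G H : Type*} [Group G] [Group H]

/-- `x` is a 2-cell of `B𝔠` with south, east, north and west edges `s e n w`. -/
def IsTwoCell (τ : H →* G) (s e n w : G) (x : H) : Prop :=
  τ x * w * n = s * e

variable {τ : H →* G} {α : G →* MulAut H}

lemma IsTwoCell.hcomp (equi : ∀ (g : G) (x : H), τ (α g x) = g * τ x * g⁻¹)
    {s e n w s' e' n' : G} {x y : H}
    (hx : IsTwoCell τ s e n w x) (hy : IsTwoCell τ s' e' n' e y) :
    IsTwoCell τ (s * s') e' (n * n') w (α s y * x) := by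
  unfold IsTwoCell at *
  calc τ (α s y * x) * w * (n * n') = s * τ y * s⁻¹ * (τ x * w * n) * n' := by
        rw [map_mul, equi]; group
    _ = s * (τ y * e * n') := by rw [hx]; group
    _ = s * s' * e' := by rw [hy]; group

lemma IsTwoCell.vcomp (equi : ∀ (g : G) (x : H), τ (α g x) = g * τ x * g⁻¹)
    {s e n w e' n' w' : G} {x y : H}
    (hx : IsTwoCell τ s e n w x) (hy : IsTwoCell τ n e' n' w' y) :
    IsTwoCell τ s (e * e') n' (w * w') (x * α w y) := by
  unfold IsTwoCell at *
  calc τ (x * α w y) * (w * w') * n' = τ x * w * (τ y * w' * n') := by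
        rw [map_mul, equi]; group
    _ = s * (e * e') := by rw [hy, ← mul_assoc (τ x * w), hx]; group

lemma IsTwoCell.conj_apply (peif : ∀ x x' : H, α (τ x) x' = x * x' * x⁻¹)
    {s e n w : G} {x : H} (hx : IsTwoCell τ s e n w x) (y : H) :
    x * α (w * n) y * x⁻¹ = α (s * e) y := by
  rw [← peif, ← MulAut.mul_apply, ← map_mul, ← mul_assoc, hx]

end TwoCell

section Aggregation
variable {G H : Type*} [Group G] [Group H] (α : G →* MulAut H)
  (h v : ℤ × ℤ → G) (X : ℤ × ℤ → H)

/-- The composite of the squares of the row `[a, a+n] × [j, j+1]`. -/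
def rowAgg : ℕ → ℤ → ℤ → H
  | 0, _, _ => 1
  | n + 1, a, j => α (Fh h a (a + n) j) (X (a + n, j)) * rowAgg n a j

/-- The composite of the rows of the rectangle `[a, a+n] × [c, c+m]`. -/
def rectAgg (n : ℕ) : ℕ → ℤ → ℤ → H
  | 0, _, _ => 1
  | m + 1, a, c => rectAgg n m a c * α (Fv v a c (c + m)) (rowAgg α h X n a (c + m))

lemma rectAgg_zero_left (m : ℕ) (a c : ℤ) : rectAgg α h v X 0 m a c = 1 := by
  induction m with
  | zero => rfl
  | succ m ih => simp [rectAgg, rowAgg, ih]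

lemma rectAgg_one_one (a c : ℤ) : rectAgg α h v X 1 1 a c = X (a, c) := by
  simp [rectAgg, rowAgg, Fh_self, Fv_self]

lemma rowAgg_add (n k : ℕ) (a j : ℤ) :
    rowAgg α h X (n + k) a j
      = α (Fh h a (a + n) j) (rowAgg α h X k (a + n) j) * rowAgg α h X n a j := by
  induction k with
  | zero => simp [rowAgg]
  | succ k ih =>
      rw [← add_assoc, rowAgg, ih, rowAgg, Nat.cast_add, ← add_assoc,
        Fh_trans h j (by omega : a ≤ a + n) (by omega : a + n ≤ a + n + k)]
      simp only [map_mul, MulAut.mul_apply, add_assoc]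
      group

lemma rectAgg_add_right (n m k : ℕ) (a c : ℤ) :
    rectAgg α h v X n (m + k) a c
      = rectAgg α h v X n m a c * α (Fv v a c (c + m)) (rectAgg α h v X n k a (c + m)) := by
  induction k with
  | zero => simp [rectAgg]
  | succ k ih =>
      rw [← add_assoc, rectAgg, ih, rectAgg, Nat.cast_add, ← add_assoc,
        Fv_trans v a (by omega : c ≤ c + m) (by omega : c + m ≤ c + m + k)]
      simp only [map_mul, MulAut.mul_apply, add_assoc]
      group

end Aggregation

section CrossedModule
variable {G H : Type*} [Group G] [Group H] {τ : H →* G} {α : G →* MulAut H}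
  {h v : ℤ × ℤ → G} {X : ℤ × ℤ → H}

lemma rowAgg_isTwoCell (equi : ∀ (g : G) (x : H), τ (α g x) = g * τ x * g⁻¹)
    (hcompat : ∀ i j, IsTwoCell τ (h (i, j)) (v (i + 1, j)) (h (i, j + 1)) (v (i, j)) (X (i, j)))
    (n : ℕ) (a j : ℤ) :
    IsTwoCell τ (Fh h a (a + n) j) (v (a + n, j)) (Fh h a (a + n) (j + 1)) (v (a, j))
      (rowAgg α h X n a j) := by
  induction n with
  | zero => simp [IsTwoCell, rowAgg, Fh_self]
  | succ n ih =>
      rw [rowAgg, Nat.cast_succ, ← add_assoc, Fh_succ h j (by omega), Fh_succ h (j + 1) (by omega)]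
      exact ih.hcomp equi (hcompat _ _)

lemma rectAgg_isTwoCell (equi : ∀ (g : G) (x : H), τ (α g x) = g * τ x * g⁻¹)
    (hcompat : ∀ i j, IsTwoCell τ (h (i, j)) (v (i + 1, j)) (h (i, j + 1)) (v (i, j)) (X (i, j)))
    (n m : ℕ) (a c : ℤ) :
    IsTwoCell τ (Fh h a (a + n) c) (Fv v (a + n) c (c + m)) (Fh h a (a + n) (c + m))
      (Fv v a c (c + m)) (rectAgg α h v X n m a c) := by
  induction m with
  | zero => simp [IsTwoCell, rectAgg, Fv_self]
  | succ m ih =>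
      rw [rectAgg, Nat.cast_succ, ← add_assoc, Fv_succ v _ (by omega), Fv_succ v _ (by omega)]
      exact ih.vcomp equi (rowAgg_isTwoCell equi hcompat n a (c + m))

/-- This is the interchange law of `B𝔠`; PEIF enters through `IsTwoCell.conj_apply`, which lets
the rows of the right-hand block slide past the left-hand block `rectAgg α h v X n m a c`. -/
lemma rectAgg_add_left (equi : ∀ (g : G) (x : H), τ (α g x) = g * τ x * g⁻¹)
    (peif : ∀ x x' : H, α (τ x) x' = x * x' * x⁻¹)
    (hcompat : ∀ i j, IsTwoCell τ (h (i, j)) (v (i + 1, j)) (h (i, j + 1)) (v (i, j)) (X (i, j)))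
    (n k m : ℕ) (a c : ℤ) :
    rectAgg α h v X (n + k) m a c
      = α (Fh h a (a + n) c) (rectAgg α h v X k m (a + n) c) * rectAgg α h v X n m a c := by
  induction m with
  | zero => simp [rectAgg]
  | succ m ih =>
      have key := (rectAgg_isTwoCell equi hcompat n m a c).conj_apply peif
        (rowAgg α h X k (a + n) (c + m))
      simp only [map_mul, MulAut.mul_apply] at key
      simp only [rectAgg]
      rw [ih, rowAgg_add]
      simp only [map_mul]
      rw [← key]
      group

end CrossedModule

section Aggregate
variable {G H : Type*} [Group G] [Group H] {τ : H →* G} (α : G →* MulAut H)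
  (h v : ℤ × ℤ → G) (X : ℤ × ℤ → H)

def aggregate (a b c d : ℤ) (_ : a ≤ b) (_ : c ≤ d) : H :=
  rectAgg α h v X (b - a).toNat (d - c).toNat a c

variable {α h v X}

lemma isCMRectAggregation_aggregate (equi : ∀ (g : G) (x : H), τ (α g x) = g * τ x * g⁻¹)
    (peif : ∀ x x' : H, α (τ x) x' = x * x' * x⁻¹)
    (hcompat : ∀ i j, IsTwoCell τ (h (i, j)) (v (i + 1, j)) (h (i, j + 1)) (v (i, j)) (X (i, j))) :
    IsCMRectAggregation τ α h v X (aggregate α h v X) := by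
  refine ⟨?_, ?_, ?_, ?_, ?_⟩
  · intro i j
    simp [aggregate, rectAgg_one_one]
  · rintro a b c d hab hcd (rfl | rfl)
    · simp [aggregate, rectAgg_zero_left]
    · simp [aggregate, rectAgg]
  · intro a b c d hab hcd
    obtain ⟨n, rfl⟩ := Int.le.dest hab
    obtain ⟨m, rfl⟩ := Int.le.dest hcd
    simpa [aggregate, IsTwoCell] using rectAgg_isTwoCell equi hcompat n m a c
  · intro a b' b c d h1 h2 hcd
    obtain ⟨n, rfl⟩ := Int.le.dest h1
    obtain ⟨k, rfl⟩ := Int.le.dest h2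
    obtain ⟨m, rfl⟩ := Int.le.dest hcd
    simpa [aggregate, show (a + n + k - a).toNat = n + k by omega]
      using rectAgg_add_left equi peif hcompat n k m a c
  · intro a b c d' d hab h1 h2
    obtain ⟨n, rfl⟩ := Int.le.dest hab
    obtain ⟨m, rfl⟩ := Int.le.dest h1
    obtain ⟨k, rfl⟩ := Int.le.dest h2
    simpa [aggregate, show (c + m + k - c).toNat = m + k by omega]
      using rectAgg_add_right α h v X n m k a c

lemma IsCMRectAggregation.eq_rowAgg {F : ∀ a b c d : ℤ, a ≤ b → c ≤ d → H}
    (hF : IsCMRectAggregation τ α h v X F) (n : ℕ) :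
    ∀ (a b j : ℤ), b = a + n → ∀ (hab : a ≤ b) (hj : j ≤ j + 1),
      F a b j (j + 1) hab hj = rowAgg α h X n a j := by
  obtain ⟨hsquare, hdegen, -, hhor, -⟩ := hF
  induction n with
  | zero =>
      intro a b j hb hab hj
      exact hdegen a b j (j + 1) hab hj (Or.inl (by omega))
  | succ n ih =>
      intro a b j hb hab hj
      obtain rfl : b = a + n + 1 := by omega
      rw [hhor a (a + n) _ j (j + 1) (by omega) (by omega) hj, ih a (a + n) j rfl, hsquare,
        rowAgg]

lemma IsCMRectAggregation.eq_rectAgg {F : ∀ a b c d : ℤ, a ≤ b → c ≤ d → H}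
    (hF : IsCMRectAggregation τ α h v X F) (m : ℕ) :
    ∀ (a b c d : ℤ), d = c + m → ∀ (hab : a ≤ b) (hcd : c ≤ d),
      F a b c d hab hcd = rectAgg α h v X (b - a).toNat m a c := by
  have ⟨_, hdegen, _, _, hver⟩ := hF
  induction m with
  | zero =>
      intro a b c d hd hab hcd
      exact hdegen a b c d hab hcd (Or.inr (by omega))
  | succ m ih =>
      intro a b c d hd hab hcd
      obtain rfl : d = c + m + 1 := by omega
      rw [hver a b c (c + m) _ hab (by omega) (by omega), ih a b c (c + m) rfl,
        hF.eq_rowAgg (b - a).toNat a b (c + m) (by omega), rectAgg]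

lemma IsCMRectAggregation.eq_aggregate {F : ∀ a b c d : ℤ, a ≤ b → c ≤ d → H}
    (hF : IsCMRectAggregation τ α h v X F) : F = aggregate α h v X := by
  funext a b c d hab hcd
  exact hF.eq_rectAgg (d - c).toNat a b c d (by omega) hab hcd

end Aggregate

/-- Planar data valued in a crossed module of groups, compatible on elementary squares,
aggregates uniquely over all rectangles `[a,b] × [c,d]` with corners in `ℤ²`. -/
theorem unique_crossed_module_rectangle_aggregation {G H : Type*} [Group G] [Group H]
    (τ : H →* G) (α : G →* MulAut H)
    (equi : ∀ (g : G) (x : H), τ (α g x) = g * τ x * g⁻¹)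
    (peif : ∀ x x' : H, α (τ x) x' = x * x' * x⁻¹)
    (h v : ℤ × ℤ → G) (X : ℤ × ℤ → H)
    (hcompat : ∀ i j : ℤ,
      τ (X (i, j)) * v (i, j) * h (i, j + 1) = h (i, j) * v (i + 1, j)) :
    ∃! F : ∀ a b c d : ℤ, a ≤ b → c ≤ d → H, IsCMRectAggregation τ α h v X F :=
  ⟨aggregate α h v X, isCMRectAggregation_aggregate equi peif hcompat,
    fun _ hF => hF.eq_aggregate⟩
end
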